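/- arXiv:2408.02818 — 5 statements merged into one kernel-verified Lean document; each statement's English description precedes it below -/
import Mathlib

section
/- Let G be a finite group and p a prime. The number of conjugacy classes of p-regular elements of G equals the number of conjugacy classes of p-regular elements of G/O_p(G), where O_p(G) is the largest normal p-subgroup of G. -/
/-!
If `f : G →* Q` is surjective with kernel a `p`-group `K`, then `p`-regular elements of `G` with
the same image are conjugate. For abelian `K` this is the vanishing of `H¹(⟨x⟩, K)` for a
`p'`-element `x`: writing `y = x * a` and taking `m` prime to `p` with `x ^ m = y ^ m = 1`, the
identity `y ^ m = 1` says that the norm of `a` under conjugation by `x` is trivial, and such an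
`a` is a coboundary since `m` is invertible modulo the order of `a`. The general case follows by
induction on `|G|`, passing to `G ⧸ Z(K)`. Since moreover `p`-regular elements of `Q` lift to
`p`-regular elements, `f` induces a bijection on `p`-regular conjugacy classes.
-/

open Finset
open scoped IsMulCommutative

theorem prod_range_succ_iterate {M : Type*} [CommMonoid M] (φ : M →* M) (a : M) (n : ℕ) :
    ∏ i ∈ range (n + 1), φ^[i] a = φ (∏ i ∈ range n, φ^[i] a) * a := by
  simp only [prod_range_succ', Function.iterate_succ_apply', map_prod, Function.iterate_zero_apply]

theorem exists_map_eq_mul_of_prod_iterate_eq_one {A : Type*} [CommGroup A] (φ : A →* A) {a : A}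
    {m : ℕ} (hm : m.Coprime (orderOf a)) (hnorm : ∏ i ∈ range m, φ^[i] a = 1) :
    ∃ c, φ c = c * a := by
  set u : ℕ → A := fun n ↦ ∏ i ∈ range n, φ^[i] a
  set P := ∏ n ∈ range m, u n
  -- `u 0 = u m = 1`, so shifting the index of `P` does not change it
  have hshift : ∏ n ∈ range m, u (n + 1) = P := by
    have := prod_range_succ' u m
    rwa [prod_range_succ, show u m = 1 from hnorm, show u 0 = 1 from prod_range_zero _,
      mul_one, mul_one, eq_comm] at this
  have hP : φ P = P * (a ^ m)⁻¹ := by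
    rw [map_prod, eq_mul_inv_iff_mul_eq, ← hshift, pow_eq_prod_const, ← prod_mul_distrib]
    exact prod_congr rfl fun n _ ↦ (prod_range_succ_iterate φ a n).symm
  obtain ⟨s, hs⟩ := exists_pow_eq_self_of_coprime hm
  refine ⟨(P ^ s)⁻¹, ?_⟩
  rw [map_inv, map_pow, hP, mul_pow, inv_pow, mul_inv, inv_inv, hs]

theorem mul_pow_eq_pow_mul_prod_iterate_conj {G : Type*} [Group G] {A : Subgroup G} [A.Normal]
    [IsMulCommutative A] (x : G) (a : A) (n : ℕ) :
    (x * a) ^ n = x ^ n * ↑(∏ i ∈ range n, (MulAut.conjNormal x⁻¹).toMonoidHom^[i] a) := by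
  induction n with
  | zero => simp
  | succ n ih =>
    rw [prod_range_succ_iterate, pow_succ, ih, Subgroup.coe_mul, MulEquiv.coe_toMonoidHom,
      MulAut.conjNormal_apply]
    group

theorem isConj_mul_of_isMulCommutative {G : Type*} [Group G] {A : Subgroup G} [A.Normal]
    [IsMulCommutative A] {x a : G} (ha : a ∈ A) {m : ℕ} (hx : x ^ m = 1) (hxa : (x * a) ^ m = 1)
    (hm : m.Coprime (orderOf a)) : IsConj x (x * a) := by
  set φ : A →* A := (MulAut.conjNormal x⁻¹).toMonoidHom
  have hnorm : ∏ i ∈ range m, φ^[i] ⟨a, ha⟩ = 1 := by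
    have := mul_pow_eq_pow_mul_prod_iterate_conj x ⟨a, ha⟩ m
    rwa [hxa, hx, one_mul, eq_comm, OneMemClass.coe_eq_one] at this
  obtain ⟨c, hc⟩ := exists_map_eq_mul_of_prod_iterate_eq_one φ
    (by rwa [Subgroup.orderOf_mk]) hnorm
  have hc' : x⁻¹ * c * x = c * a := by
    simpa [φ, MulAut.conjNormal_apply] using congrArg Subtype.val hc
  refine isConj_iff.mpr ⟨(c : G), ?_⟩
  calc (c : G) * x * (c : G)⁻¹ = x * (x⁻¹ * c * x) * (c : G)⁻¹ := by group
    _ = x * a := by rw [hc', setLike_mul_comm c.2 ha, ← mul_assoc, mul_inv_cancel_right]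

theorem IsConj.orderOf_eq {G : Type*} [Group G] {x y : G} (h : IsConj x y) :
    orderOf x = orderOf y := by
  obtain ⟨c, rfl⟩ := isConj_iff.mp h
  exact (MulEquiv.orderOf_eq (MulAut.conj c) x).symm

theorem exists_isConj_map_eq_of_isConj_map {G Q : Type*} [Group G] [Group Q] {f : G →* Q}
    (hf : Function.Surjective f) {x y : G} (h : IsConj (f x) (f y)) :
    ∃ x', IsConj x x' ∧ f x' = f y := by
  obtain ⟨c, hc⟩ := isConj_iff.mp h
  obtain ⟨g, rfl⟩ := hf c
  exact ⟨g * x * g⁻¹, isConj_iff.mpr ⟨g, rfl⟩, by rwa [map_mul, map_mul, map_inv]⟩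

theorem isConj_of_map_eq_of_isPGroup_ker {p : ℕ} (hp : p.Prime) {G : Type*} [Group G] [Finite G]
    {Q : Type*} [Group Q] {f : G →* Q} (hf : IsPGroup p f.ker) {x y : G} (hx : ¬ p ∣ orderOf x)
    (hy : ¬ p ∣ orderOf y) (hxy : f x = f y) : IsConj x y := by
  induction h : Nat.card G using Nat.strong_induction_on generalizing G with
  | _ n ih =>
  by_cases hK : f.ker = ⊥
  · exact (MonoidHom.ker_eq_bot_iff f).mp hK hxy ▸ IsConj.refl x
  have : Fact p.Prime := ⟨hp⟩
  have : Nontrivial f.ker := (Subgroup.nontrivial_iff_ne_bot _).mpr hK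
  -- the centre of `ker f` is nontrivial, abelian and normal in `G`
  set Z := (Subgroup.center f.ker).map f.ker.subtype
  have hZ : Z ≠ ⊥ := by
    rw [Ne, Subgroup.map_eq_bot_iff_of_injective _ f.ker.subtype_injective]
    exact (Subgroup.nontrivial_iff_ne_bot _).mp hf.center_nontrivial
  have hZf : Z ≤ f.ker := Subgroup.map_subtype_le _
  have hcard : Nat.card (G ⧸ Z) < n := by
    rw [← h, ← Subgroup.index_eq_card, ← Z.index_mul_card]
    exact lt_mul_of_one_lt_right Nat.card_pos (Z.one_lt_card_iff_ne_bot.mpr hZ)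
  have hf' : IsPGroup p (QuotientGroup.lift Z f hZf).ker := by
    rw [QuotientGroup.ker_lift]
    exact hf.map _
  have hxyZ : IsConj (x : G ⧸ Z) y :=
    ih _ hcard hf' (fun h ↦ hx (h.trans (orderOf_map_dvd (QuotientGroup.mk' Z) x)))
      (fun h ↦ hy (h.trans (orderOf_map_dvd (QuotientGroup.mk' Z) y))) hxy rfl
  obtain ⟨x', hxx', hx'y⟩ :=
    exists_isConj_map_eq_of_isConj_map (QuotientGroup.mk'_surjective Z) hxyZ
  have ha : x'⁻¹ * y ∈ Z := QuotientGroup.eq.mp hx'y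
  have hx' : ¬ p ∣ orderOf x' := hxx'.orderOf_eq ▸ hx
  obtain ⟨k, hk⟩ := IsPGroup.iff_orderOf.mp (hf.to_le hZf) ⟨_, ha⟩
  have hm : (orderOf x' * orderOf y).Coprime (orderOf (x'⁻¹ * y)) := by
    rw [← Subgroup.orderOf_mk _ ha, hk]
    exact Nat.Coprime.pow_right _ ((hp.coprime_iff_not_dvd.mpr
      (fun h ↦ (hp.dvd_mul.mp h).elim hx' hy)).symm)
  have := isConj_mul_of_isMulCommutative ha (m := orderOf x' * orderOf y)
    (by rw [pow_mul, pow_orderOf_eq_one, one_pow])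
    (by rw [mul_inv_cancel_left, mul_comm, pow_mul, pow_orderOf_eq_one, one_pow]) hm
  exact hxx'.trans (by rwa [mul_inv_cancel_left] at this)

theorem exists_not_dvd_orderOf_map_eq {p : ℕ} (hp : p.Prime) {G Q : Type*} [Group G] [Finite G]
    [Group Q] {f : G →* Q} (hf : Function.Surjective f) {q : Q} (hq : ¬ p ∣ orderOf q) :
    ∃ g, ¬ p ∣ orderOf g ∧ f g = q := by
  obtain ⟨g₀, rfl⟩ := hf q
  -- `g₁` is `p`-regular, and `q` is a power of `f g₁` because `p ∤ orderOf q`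
  set n := orderOf g₀
  set g₁ := g₀ ^ p ^ n.factorization p
  have hg₁ : ¬ p ∣ orderOf g₁ := fun h ↦ Nat.not_dvd_ordCompl hp (orderOf_pos g₀).ne' <|
    h.trans <| orderOf_dvd_of_pow_eq_one <| by
      rw [← pow_mul, Nat.ordProj_mul_ordCompl_eq_self, pow_orderOf_eq_one]
  obtain ⟨s, hs⟩ := exists_pow_eq_self_of_coprime
    (((hp.coprime_iff_not_dvd.mpr hq).pow_left (n.factorization p)))
  exact ⟨g₁ ^ s, fun h ↦ hg₁ (h.trans (orderOf_pow_dvd s)), by rw [map_pow, map_pow, hs]⟩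

def pRegularConjClasses (p : ℕ) (G : Type*) [Group G] : Set (ConjClasses G) :=
  {C | ∃ g : G, ¬ p ∣ orderOf g ∧ ConjClasses.mk g = C}

theorem card_pRegularConjClasses_eq_of_isPGroup_ker {p : ℕ} (hp : p.Prime) {G Q : Type*}
    [Group G] [Finite G] [Group Q] {f : G →* Q} (hf : Function.Surjective f)
    (hker : IsPGroup p f.ker) :
    Nat.card (pRegularConjClasses p G) = Nat.card (pRegularConjClasses p Q) := by
  refine Nat.card_congr (Set.BijOn.equiv (ConjClasses.map f) ⟨?_, ?_, ?_⟩)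
  · rintro _ ⟨g, hg, rfl⟩
    exact ⟨f g, fun h ↦ hg (h.trans (orderOf_map_dvd f g)), rfl⟩
  · rintro _ ⟨x, hx, rfl⟩ _ ⟨y, hy, rfl⟩ hxy
    obtain ⟨x', hxx', hx'y⟩ := exists_isConj_map_eq_of_isConj_map hf
      (ConjClasses.mk_eq_mk_iff_isConj.mp hxy)
    exact ConjClasses.mk_eq_mk_iff_isConj.mpr <| hxx'.trans <|
      isConj_of_map_eq_of_isPGroup_ker hp hker (hxx'.orderOf_eq ▸ hx) hy hx'y
  · rintro _ ⟨q, hq, rfl⟩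
    obtain ⟨g, hg, rfl⟩ := exists_not_dvd_orderOf_map_eq hp hf hq
    exact ⟨ConjClasses.mk g, ⟨g, hg, rfl⟩, rfl⟩

theorem card_p_regular_classes_quotient_pCore_general (G : Type*) [Group G] [Finite G]
    (p : ℕ) (hp : p.Prime) (N : Subgroup G) [N.Normal] (hN : IsPGroup p N) :
    Nat.card {C : ConjClasses G | ∃ g : G, ¬ p ∣ orderOf g ∧ ConjClasses.mk g = C}
      = Nat.card {C : ConjClasses (G ⧸ N) |
          ∃ g : G ⧸ N, ¬ p ∣ orderOf g ∧ ConjClasses.mk g = C} :=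
  card_pRegularConjClasses_eq_of_isPGroup_ker hp (QuotientGroup.mk'_surjective N)
    (by rwa [QuotientGroup.ker_mk'])

/-- The number of conjugacy classes of `p`-regular elements equals that of `G ⧸ O_p(G)`,
where `N = O_p(G)` is the largest normal `p`-subgroup of `G`. -/
theorem card_p_regular_classes_quotient_pCore (G : Type*) [Group G] [Finite G]
    (p : ℕ) (hp : p.Prime) (N : Subgroup G) [N.Normal] (hN : IsPGroup p N)
    (hmax : ∀ K : Subgroup G, K.Normal → IsPGroup p K → K ≤ N) :
    Nat.card {C : ConjClasses G | ∃ g : G, ¬ p ∣ orderOf g ∧ ConjClasses.mk g = C}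
      = Nat.card {C : ConjClasses (G ⧸ N) |
          ∃ g : G ⧸ N, ¬ p ∣ orderOf g ∧ ConjClasses.mk g = C} :=
  card_p_regular_classes_quotient_pCore_general G p hp N hN
end

section
/- Let G be a finite group, z ∈ Z(G), and a ∈ G such that the conjugacy class of az equals the conjugacy class of a. Then the order of z divides the size of the conjugacy class of a. -/
/-!
Because `z` is central, multiplying by `z` commutes with conjugation, so `a ~ a * z` propagates to
`a ~ a * z ^ k` for every `k`. Hence the class of `a` is stable under right multiplication by
`⟨z⟩`, i.e. a union of left cosets of `⟨z⟩`, and its size is a multiple of `|⟨z⟩| = orderOf z`.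
-/

open Pointwise

theorem Subgroup.card_dvd_card_of_mul_subset {G : Type*} [Group G] (H : Subgroup G) {S : Set G}
    (hS : S * H ⊆ S) : Nat.card H ∣ Nat.card S := by
  have hSH : S * H = S := hS.antisymm (Set.subset_mul_left S H.one_mem)
  calc Nat.card H ∣ Nat.card H * Nat.card (((↑) : G → G ⧸ H) '' S) := dvd_mul_right _ _
    _ = Nat.card (S * H : Set G) := (H.card_mul_eq_card_subgroup_mul_card_quotient S).symm
    _ = Nat.card S := by rw [hSH]

theorem IsConj.mul_right_of_mem_center {G : Type*} [Group G] {a b z : G} (hab : IsConj a b)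
    (hz : z ∈ Subgroup.center G) : IsConj (a * z) (b * z) := by
  obtain ⟨c, rfl⟩ := isConj_iff.mp hab
  refine isConj_iff.mpr ⟨c, ?_⟩
  simp only [mul_assoc, (Subgroup.mem_center_iff.mp hz c⁻¹).symm]

theorem isConj_mul_zpow_of_isConj_mul {G : Type*} [Group G] {a z : G}
    (hz : z ∈ Subgroup.center G) (ha : IsConj a (a * z)) (k : ℤ) : IsConj a (a * z ^ k) := by
  have step (n : ℤ) : IsConj (a * z ^ n) (a * z ^ (n + 1)) := by
    simpa only [mul_assoc, ← zpow_one_add, add_comm 1 n] using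
      ha.mul_right_of_mem_center (zpow_mem hz n)
  induction k using Int.induction_on with
  | zero => simpa using IsConj.refl a
  | succ k ih => exact ih.trans (step k)
  | pred k ih => exact ih.trans (by simpa using (step (-k - 1)).symm)

theorem orderOf_central_dvd_class_card_general (G : Type*) [Group G]
    (z : G) (hz : z ∈ Subgroup.center G) (a : G)
    (h : {b : G | IsConj (a * z) b} = {b : G | IsConj a b}) :
    orderOf z ∣ Nat.card {b : G | IsConj a b} := by
  have hconj : IsConj a (a * z) := by
    have hmem : a * z ∈ {b : G | IsConj (a * z) b} := IsConj.refl _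
    rwa [h] at hmem
  rw [← Nat.card_zpowers z]
  refine (Subgroup.zpowers z).card_dvd_card_of_mul_subset ?_
  rintro _ ⟨b, hb, _, ⟨k, rfl⟩, rfl⟩
  exact (isConj_mul_zpow_of_isConj_mul hz hconj k).trans
    (hb.mul_right_of_mem_center (zpow_mem hz k))

theorem orderOf_central_dvd_class_card (G : Type*) [Group G] [Finite G]
    (z : G) (hz : z ∈ Subgroup.center G) (a : G)
    (h : {b : G | IsConj (a * z) b} = {b : G | IsConj a b}) :
    orderOf z ∣ Nat.card {b : G | IsConj a b} :=
  orderOf_central_dvd_class_card_general G z hz a h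
end

section
/- Let G be a finite group, π a set of primes, and suppose G is π-separable. If every π-element of G has conjugacy class size a π'-number (i.e., the class size is not divisible by any prime in π), then G has abelian Hall π-subgroups. -/
/-!
Write `O_π(G)` (`piRadical π G`) for the largest normal π-subgroup of `G`.
Induct on `|G|`. If `O_{π'}(G) ≠ 1`, the hypotheses pass to `G ⧸ O_{π'}(G)`, because
π-elements lift along quotient maps and class sizes can only shrink; an abelian Hall π-subgroup
of the quotient lifts, by Schur–Zassenhaus, to a complement of `O_{π'}(G)` in its preimage.
If `O_{π'}(G) = 1`, let `K = O_π(G)`. For a π-element `x`, the π-number `|K : C_K(x)|` divides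
the π'-number `|G : C_G(x)|`, so `K` centralizes every π-element. By the Hall–Higman lemma
`C_G(K) ≤ K`, hence every π-element lies in `K`: so `K` is abelian and `G ⧸ K` is a π'-group.
-/

/-- A finite group is `π`-separable if it has a subnormal series each of whose factors is
either a `π`-group or a `π'`-group. -/
def IsPiSeparable (G : Type*) [Group G] (π : Set ℕ) : Prop :=
  ∃ (n : ℕ) (s : Fin (n + 1) → Subgroup G),
    s 0 = ⊥ ∧ s (Fin.last n) = ⊤ ∧
    ∀ i : Fin n,
      s i.castSucc ≤ s i.succ ∧
      ((s i.castSucc).subgroupOf (s i.succ)).Normal ∧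
      ((∀ ℓ : ℕ, ℓ.Prime →
          ℓ ∣ Nat.card ((s i.succ) ⧸ (s i.castSucc).subgroupOf (s i.succ)) → ℓ ∈ π) ∨
       (∀ ℓ : ℕ, ℓ.Prime →
          ℓ ∣ Nat.card ((s i.succ) ⧸ (s i.castSucc).subgroupOf (s i.succ)) → ℓ ∉ π))

open Subgroup

universe u

def IsPiNumber (π : Set ℕ) (n : ℕ) : Prop := ∀ ℓ : ℕ, ℓ.Prime → ℓ ∣ n → ℓ ∈ π

namespace IsPiNumber

variable {π : Set ℕ} {m n : ℕ}

theorem of_dvd (hn : IsPiNumber π n) (h : m ∣ n) : IsPiNumber π m :=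
  fun ℓ hℓ hd => hn ℓ hℓ (hd.trans h)

theorem one (π : Set ℕ) : IsPiNumber π 1 :=
  fun _ hℓ hd => (hℓ.ne_one (Nat.dvd_one.mp hd)).elim

theorem mul (hm : IsPiNumber π m) (hn : IsPiNumber π n) : IsPiNumber π (m * n) :=
  fun ℓ hℓ hd => (hℓ.dvd_mul.mp hd).elim (hm ℓ hℓ) (hn ℓ hℓ)

theorem of_prime {p : ℕ} (hp : p.Prime) (h : p ∈ π) : IsPiNumber π p :=
  fun _ hℓ hd => (Nat.prime_dvd_prime_iff_eq hℓ hp).mp hd ▸ h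

theorem coprime (hm : IsPiNumber π m) (hn : IsPiNumber πᶜ n) : m.Coprime n :=
  Nat.coprime_of_dvd fun ℓ hℓ hdm hdn => hn ℓ hℓ hdn (hm ℓ hℓ hdm)

theorem eq_one (h : IsPiNumber π n) (h' : IsPiNumber πᶜ n) : n = 1 :=
  (h.coprime h').eq_one_of_dvd dvd_rfl

theorem exists_mul_eq (π : Set ℕ) (hn : n ≠ 0) :
    ∃ u v, u * v = n ∧ IsPiNumber π u ∧ IsPiNumber πᶜ v := by
  induction n using induction_on_primes with
  | zero => exact absurd rfl hn
  | one => exact ⟨1, 1, rfl, one π, one πᶜ⟩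
  | prime_mul p a hp ih =>
    obtain ⟨u, v, rfl, hu, hv⟩ := ih (right_ne_zero_of_mul hn)
    by_cases hpπ : p ∈ π
    · exact ⟨p * u, v, by ring, (of_prime hp hpπ).mul hu, hv⟩
    · exact ⟨u, p * v, by ring, hu, (of_prime hp hpπ).mul hv⟩

end IsPiNumber

section Index

variable {G : Type*} [Group G]

theorem card_mul_relIndex {H K : Subgroup G} (h : H ≤ K) :
    Nat.card H * H.relIndex K = Nat.card K := by
  simpa only [relIndex_bot_left] using relIndex_mul_relIndex _ _ _ bot_le h

theorem relIndex_eq_relIndex_sup_of_normal (H K : Subgroup G) [K.Normal] [K.FiniteIndex] :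
    H.relIndex K = H.relIndex (H ⊔ K) := by
  have key : H.relIndex K * K.index = H.relIndex (H ⊔ K) * K.index := by
    rw [← inf_relIndex_right, relIndex_mul_index inf_le_right, ← relIndex_mul_index inf_le_left,
      inf_relIndex_left, ← relIndex_sup_right H K, ← relIndex_mul_index le_sup_left,
      ← relIndex_mul_index (le_sup_right : K ≤ H ⊔ K), mul_left_comm]
  exact Nat.eq_of_mul_eq_mul_right (Nat.pos_of_ne_zero FiniteIndex.index_ne_zero) key

theorem relIndex_inf_dvd_of_normal {A B : Subgroup G} [(A.subgroupOf B).Normal] (L : Subgroup G) :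
    A.relIndex (L ⊓ B) ∣ A.relIndex B := by
  rw [← relIndex_subgroupOf inf_le_right]
  exact relIndex_dvd_index_of_normal _ _

theorem le_comap_mk' (N : Subgroup G) [N.Normal] (R : Subgroup (G ⧸ N)) :
    N ≤ R.comap (QuotientGroup.mk' N) :=
  (QuotientGroup.ker_mk' N).symm.le.trans (MonoidHom.ker_le_comap _ _)

theorem relIndex_comap_mk' (N : Subgroup G) [N.Normal] (R : Subgroup (G ⧸ N)) :
    N.relIndex (R.comap (QuotientGroup.mk' N)) = Nat.card R := by
  have := relIndex_ker (K := R.comap (QuotientGroup.mk' N)) (QuotientGroup.mk' N)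
  rwa [QuotientGroup.ker_mk', map_comap_eq_self_of_surjective (QuotientGroup.mk'_surjective N)]
    at this

end Index

section PiElements

variable {G Q : Type*} [Group G] [Group Q] {π : Set ℕ}

theorem exists_isPiNumber_orderOf_map_eq (f : G →* Q) {g : G} (hg : IsOfFinOrder g)
    (hq : IsPiNumber π (orderOf (f g))) : ∃ x, IsPiNumber π (orderOf x) ∧ f x = f g := by
  obtain ⟨u, v, huv, hu, hv⟩ := IsPiNumber.exists_mul_eq π hg.orderOf_pos.ne'
  obtain ⟨a, b, hab⟩ : IsCoprime (u : ℤ) v := Nat.isCoprime_iff_coprime.mpr (hu.coprime hv)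
  have hfu : orderOf (f g) ∣ u := (hq.coprime hv).dvd_of_dvd_mul_right (huv ▸ orderOf_map_dvd f g)
  refine ⟨g ^ (b * v), hu.of_dvd (orderOf_dvd_of_pow_eq_one ?_), ?_⟩
  · rw [← zpow_natCast, ← zpow_mul, mul_assoc, ← Nat.cast_mul, mul_comm v, huv, mul_comm,
      zpow_mul, zpow_natCast, pow_orderOf_eq_one, one_zpow]
  · rw [map_zpow, ← mul_inv_eq_one, ← zpow_sub_one, ← orderOf_dvd_iff_zpow_eq_one]
    exact (Int.natCast_dvd_natCast.mpr hfu).trans ⟨-a, by linarith⟩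

theorem exists_isPiNumber_orderOf_map_eq_of_surjective [Finite G] {f : G →* Q}
    (hf : Function.Surjective f) {q : Q} (hq : IsPiNumber π (orderOf q)) :
    ∃ x, IsPiNumber π (orderOf x) ∧ f x = q := by
  obtain ⟨g, rfl⟩ := hf q
  exact exists_isPiNumber_orderOf_map_eq f (isOfFinOrder_of_finite g) hq

end PiElements

section ClassSizes

variable {G Q : Type*} [Group G] [Group Q]

theorem card_isConj_eq_index_centralizer (x : G) :
    Nat.card {z : G | IsConj x z} = (centralizer {x}).index := by
  have horbit : {z : G | IsConj x z} = MulAction.orbit (ConjAct G) x := by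
    ext z
    rw [Set.mem_ofPred_eq, ConjAct.mem_orbit_conjAct, isConj_comm]
  rw [horbit, Nat.card_coe_set_eq, ← MulAction.index_stabilizer,
    centralizer_eq_comap_stabilizer]
  exact (index_comap_of_surjective (f := ConjAct.toConjAct.toMonoidHom) _
    ConjAct.toConjAct.surjective).symm

theorem card_isConj_map_dvd {f : G →* Q} (hf : Function.Surjective f) (x : G) :
    Nat.card {z : Q | IsConj (f x) z} ∣ Nat.card {z : G | IsConj x z} := by
  rw [card_isConj_eq_index_centralizer, card_isConj_eq_index_centralizer,
    ← index_comap_of_surjective _ hf]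
  refine index_dvd_of_le fun c hc => ?_
  rw [mem_comap, mem_centralizer_singleton_iff, ← map_mul, ← map_mul,
    mem_centralizer_singleton_iff.mp hc]

theorem le_centralizer_of_isPiNumber [Finite G] {π : Set ℕ} {K : Subgroup G} [K.Normal]
    (hK : IsPiNumber π (Nat.card K)) {x : G}
    (hx : IsPiNumber πᶜ (Nat.card {z : G | IsConj x z})) : K ≤ centralizer {x} := by
  rw [← relIndex_eq_one, ← IsPiNumber.eq_one (hK.of_dvd (relIndex_dvd_card _ _))]
  refine hx.of_dvd ?_
  rw [card_isConj_eq_index_centralizer, relIndex_eq_relIndex_sup_of_normal]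
  exact relIndex_dvd_index_of_le le_sup_left

end ClassSizes

section Separable

variable {G G' : Type*} [Group G] [Group G'] {π : Set ℕ}

def IsPiSeparableStep (π : Set ℕ) (A B : Subgroup G) : Prop :=
  A ≤ B ∧ (A.subgroupOf B).Normal ∧
    (IsPiNumber π (A.relIndex B) ∨ IsPiNumber πᶜ (A.relIndex B))

theorem isPiSeparable_iff : IsPiSeparable G π ↔ ∃ (n : ℕ) (s : Fin (n + 1) → Subgroup G),
    s 0 = ⊥ ∧ s (Fin.last n) = ⊤ ∧ ∀ i : Fin n, IsPiSeparableStep π (s i.castSucc) (s i.succ) :=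
  Iff.rfl

namespace IsPiSeparableStep

variable {A B : Subgroup G}

theorem le_normalizer (h : IsPiSeparableStep π A B) : B ≤ normalizer (A : Set G) :=
  (normal_subgroupOf_iff_le_normalizer h.1).mp h.2.1

theorem of_relIndex_dvd (h : IsPiSeparableStep π A B) {A' B' : Subgroup G'} (hle : A' ≤ B')
    (hnorm : B' ≤ normalizer (A' : Set G')) (hdvd : A'.relIndex B' ∣ A.relIndex B) :
    IsPiSeparableStep π A' B' :=
  ⟨hle, normal_subgroupOf_of_le_normalizer hnorm,
    h.2.2.imp (fun hπ => hπ.of_dvd hdvd) (fun hπ => hπ.of_dvd hdvd)⟩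

theorem comap (h : IsPiSeparableStep π A B) (f : G' →* G) :
    IsPiSeparableStep π (A.comap f) (B.comap f) := by
  have := h.2.1
  refine h.of_relIndex_dvd (comap_mono h.1)
    ((comap_mono h.le_normalizer).trans (le_normalizer_comap f)) ?_
  rw [relIndex_comap, map_comap_eq]
  exact relIndex_inf_dvd_of_normal _

theorem map (h : IsPiSeparableStep π A B) (f : G →* G') :
    IsPiSeparableStep π (A.map f) (B.map f) := by
  refine h.of_relIndex_dvd (map_mono h.1)
    ((map_mono h.le_normalizer).trans (le_normalizer_map f)) ?_
  rw [← relIndex_comap]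
  exact relIndex_dvd_of_le_left _ (le_comap_map f A)

end IsPiSeparableStep

theorem IsPiSeparable.comap_of_injective (h : IsPiSeparable G π) {f : G' →* G}
    (hf : Function.Injective f) : IsPiSeparable G' π := by
  obtain ⟨n, s, h0, htop, hs⟩ := isPiSeparable_iff.mp h
  exact ⟨n, fun i => (s i).comap f,
    by dsimp only; rw [h0, MonoidHom.comap_bot, (MonoidHom.ker_eq_bot_iff f).mpr hf],
    by dsimp only; rw [htop, comap_top], fun i => (hs i).comap f⟩

theorem IsPiSeparable.subgroup (h : IsPiSeparable G π) (H : Subgroup G) : IsPiSeparable H π :=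
  h.comap_of_injective H.subtype_injective

theorem IsPiSeparable.of_surjective (h : IsPiSeparable G π) {f : G →* G'}
    (hf : Function.Surjective f) : IsPiSeparable G' π := by
  obtain ⟨n, s, h0, htop, hs⟩ := isPiSeparable_iff.mp h
  exact ⟨n, fun i => (s i).map f, by dsimp only; rw [h0, Subgroup.map_bot],
    by dsimp only; rw [htop, map_top_of_surjective f hf], fun i => (hs i).map f⟩

end Separable

section PiRadical

variable {G : Type*} [Group G] {π : Set ℕ}

def piRadical (π : Set ℕ) (G : Type*) [Group G] : Subgroup G :=
  sSup {N : Subgroup G | N.Normal ∧ IsPiNumber π (Nat.card N)}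

theorem le_piRadical {N : Subgroup G} [N.Normal] (h : IsPiNumber π (Nat.card N)) :
    N ≤ piRadical π G :=
  le_sSup ⟨inferInstance, h⟩

theorem piRadical_eq_top (h : IsPiNumber π (Nat.card G)) : piRadical π G = ⊤ :=
  top_le_iff.mp (le_piRadical (by rwa [card_top]))

theorem supClosed_normal_isPiNumber :
    SupClosed {N : Subgroup G | N.Normal ∧ IsPiNumber π (Nat.card N)} := by
  rintro A ⟨hA, hAπ⟩ B ⟨hB, hBπ⟩
  refine ⟨sup_normal A B, (hAπ.mul hBπ).of_dvd ?_⟩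
  rw [← card_mul_relIndex le_sup_left, relIndex_sup_left]
  exact mul_dvd_mul_left _ (relIndex_dvd_card _ _)

variable [Finite G]

theorem piRadical_mem : piRadical π G ∈ {N : Subgroup G | N.Normal ∧ IsPiNumber π (Nat.card N)} :=
  supClosed_normal_isPiNumber.sSup_mem (Set.toFinite _)
    ⟨normal_bot, by rw [card_bot]; exact IsPiNumber.one π⟩ le_rfl

instance piRadical_normal : (piRadical π G).Normal := piRadical_mem.1

theorem isPiNumber_card_piRadical : IsPiNumber π (Nat.card (piRadical π G)) := piRadical_mem.2

instance piRadical_characteristic : (piRadical π G).Characteristic := by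
  refine characteristic_iff_map_le.mpr fun ϕ => ?_
  have : ((piRadical π G).map ϕ.toMonoidHom).Normal := piRadical_normal.map _ ϕ.surjective
  exact le_piRadical (by rw [card_map_of_injective ϕ.injective]; exact isPiNumber_card_piRadical)

theorem map_subtype_piRadical_le (N : Subgroup G) [N.Normal] :
    (piRadical π N).map N.subtype ≤ piRadical π G :=
  le_piRadical (by rw [card_map_of_injective N.subtype_injective]; exact isPiNumber_card_piRadical)

theorem piRadical_ne_bot_of_normal {N : Subgroup G} [N.Normal] (h : piRadical π N ≠ ⊥) :
    piRadical π G ≠ ⊥ := by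
  intro hG
  exact h ((map_eq_bot_iff_of_injective _ N.subtype_injective).mp
    (le_bot_iff.mp (hG ▸ map_subtype_piRadical_le N)))

theorem piRadical_quotient_piRadical : piRadical π (G ⧸ piRadical π G) = ⊥ := by
  set K := piRadical π G
  set R := piRadical π (G ⧸ K)
  have hRK : R.comap (QuotientGroup.mk' K) ≤ K := by
    have : (R.comap (QuotientGroup.mk' K)).Normal := piRadical_normal.comap _
    refine le_piRadical ?_
    rw [← card_mul_relIndex (le_comap_mk' K R), relIndex_comap_mk']
    exact isPiNumber_card_piRadical.mul isPiNumber_card_piRadical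
  rw [← map_comap_eq_self_of_surjective (QuotientGroup.mk'_surjective K) R, Subgroup.map_eq_bot_iff,
    QuotientGroup.ker_mk']
  exact hRK

end PiRadical

section HallHigman

variable {π : Set ℕ}

theorem piRadical_ne_bot_or_of_series {n : ℕ} :
    ∀ {G : Type u} [Group G] [Finite G] [Nontrivial G] (s : Fin (n + 1) → Subgroup G),
      s 0 = ⊥ → s (Fin.last n) = ⊤ →
      (∀ i : Fin n, IsPiSeparableStep π (s i.castSucc) (s i.succ)) →
      piRadical π G ≠ ⊥ ∨ piRadical πᶜ G ≠ ⊥ := by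
  induction n with
  | zero => exact fun s h0 htop _ => absurd (h0.symm.trans htop) bot_ne_top
  | succ n ih =>
    intro G _ _ _ s h0 htop hs
    set N := s (Fin.last n).castSucc
    have hN : IsPiSeparableStep π N ⊤ := by simpa only [Fin.succ_last, htop] using hs (Fin.last n)
    have : N.Normal := normalizer_eq_top_iff.mp (top_le_iff.mp hN.le_normalizer)
    by_cases hNbot : N = ⊥
    · obtain ⟨-, -, hG⟩ := hNbot ▸ hN
      rw [relIndex_top_right, index_bot] at hG
      exact hG.imp (fun h => by rw [piRadical_eq_top h]; exact top_ne_bot)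
        (fun h => by rw [piRadical_eq_top h]; exact top_ne_bot)
    · have : Nontrivial N := (nontrivial_iff_ne_bot N).mpr hNbot
      refine (ih (fun i => (s i.castSucc).subgroupOf N) ?_ (subgroupOf_self N)
        fun i => (hs i.castSucc).comap N.subtype).imp
        piRadical_ne_bot_of_normal piRadical_ne_bot_of_normal
      rw [Fin.castSucc_zero, h0, bot_subgroupOf]

theorem IsPiSeparable.piRadical_ne_bot_or {G : Type*} [Group G] [Finite G] [Nontrivial G]
    (h : IsPiSeparable G π) : piRadical π G ≠ ⊥ ∨ piRadical πᶜ G ≠ ⊥ := by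
  obtain ⟨n, s, h0, htop, hs⟩ := isPiSeparable_iff.mp h
  exact piRadical_ne_bot_or_of_series s h0 htop hs

variable {G : Type*} [Group G]

theorem exists_normal_card_eq_relIndex_of_le_center {Z M : Subgroup G} [Z.Normal] [M.Normal]
    (hZM : Z ≤ M) (hZ : Z ≤ center G) (hcop : (Nat.card Z).Coprime (Z.relIndex M)) :
    ∃ H : Subgroup G, H.Normal ∧ Nat.card H = Z.relIndex M := by
  set k := Z.relIndex M
  have hcardZ : Nat.card (Z.subgroupOf M) = Nat.card Z :=
    Nat.card_congr (subgroupOfEquivOfLe hZM).toEquiv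
  obtain ⟨K, hK⟩ := exists_right_complement'_of_coprime (hcardZ ▸ hcop)
  have hKcard : Nat.card K = k := hK.symm.index_eq_card.symm
  -- `K` consists of the elements of `M` of order dividing `k`, because `Z` is central
  have hmemK : ∀ m : M, m ∈ K ↔ m ^ k = 1 := by
    refine fun m => ⟨fun hm => ?_, fun hm => ?_⟩
    · rw [← hKcard, ← K.coe_mk m hm, ← SubgroupClass.coe_pow, pow_card_eq_one', K.coe_one]
    · obtain ⟨⟨z, h⟩, rfl⟩ := hK.2 m
      have hcomm : Commute (z : M) h := Subtype.ext (mem_center_iff.mp (hZ z.2) h).symm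
      have hzZ : (z : M) ^ Nat.card Z = 1 := by
        rw [← hcardZ, ← SubgroupClass.coe_pow, pow_card_eq_one', OneMemClass.coe_one]
      have hhk : (h : M) ^ k = 1 := by
        rw [← hKcard, ← SubgroupClass.coe_pow, pow_card_eq_one', OneMemClass.coe_one]
      rw [hcomm.mul_pow, hhk, mul_one] at hm
      show (z : M) * h ∈ K
      rw [(pow_eq_one_iff_of_coprime hcop).mp ⟨hzZ, hm⟩, one_mul]
      exact h.2
  have hmemH : ∀ g : G, g ∈ K.map M.subtype ↔ g ∈ M ∧ g ^ k = 1 := by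
    intro g
    refine ⟨?_, fun ⟨hg, hgk⟩ => ⟨⟨g, hg⟩, (hmemK _).mpr (Subtype.ext hgk), rfl⟩⟩
    rintro ⟨m, hm, rfl⟩
    exact ⟨m.2, congrArg Subtype.val ((hmemK m).mp hm)⟩
  refine ⟨K.map M.subtype, ⟨fun a ha g => ?_⟩, ?_⟩
  · rw [hmemH] at ha ⊢
    exact ⟨Normal.conj_mem inferInstance a ha.1 g, by rw [conj_pow, ha.2, mul_one, mul_inv_cancel]⟩
  · rw [card_map_of_injective M.subtype_injective, hKcard]

variable [Finite G]

-- If `Z = O_π(G)` were proper, `O_π(G ⧸ Z) = 1` would force `O_{π'}(G ⧸ Z) ≠ 1`; in its preimage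
-- `Z` has π'-index, and the elements of π'-order form a nontrivial normal π'-subgroup of `G`.
theorem piRadical_eq_top_of_le_center (hsep : IsPiSeparable G π) (h : piRadical πᶜ G = ⊥)
    (hZ : piRadical π G ≤ center G) : piRadical π G = ⊤ := by
  set Z := piRadical π G
  by_contra hZtop
  have : Nontrivial (G ⧸ Z) := QuotientGroup.nontrivial_iff.mpr hZtop
  rcases (hsep.of_surjective (QuotientGroup.mk'_surjective Z)).piRadical_ne_bot_or with hR | hR
  · exact hR piRadical_quotient_piRadical
  set R := piRadical πᶜ (G ⧸ Z)
  have hRcard : IsPiNumber πᶜ (Z.relIndex (R.comap (QuotientGroup.mk' Z))) := by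
    rw [relIndex_comap_mk']; exact isPiNumber_card_piRadical
  obtain ⟨H, hH, hHcard⟩ := exists_normal_card_eq_relIndex_of_le_center (le_comap_mk' Z R) hZ
    (isPiNumber_card_piRadical.coprime hRcard)
  have hHbot : H ≤ piRadical πᶜ G := le_piRadical (hHcard ▸ hRcard)
  rw [h, le_bot_iff] at hHbot
  rw [hHbot, card_bot, relIndex_comap_mk'] at hHcard
  exact hR (eq_bot_of_card_eq R hHcard.symm)

-- Hall–Higman, Lemma 1.2.3. The π-radical of `C = C_G(O_π(G))` lies in `O_π(G)`, so it is central
-- in `C`.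
theorem centralizer_piRadical_le (hsep : IsPiSeparable G π) (h : piRadical πᶜ G = ⊥) :
    centralizer (piRadical π G : Set G) ≤ piRadical π G := by
  set C := centralizer (piRadical π G : Set G)
  have hCπ' : piRadical πᶜ C = ⊥ := by
    by_contra hC
    exact piRadical_ne_bot_of_normal hC h
  have hCcenter : piRadical π C ≤ center C := fun r hr => mem_center_iff.mpr fun c =>
    Subtype.ext (c.2 r (map_subtype_piRadical_le C ⟨r, hr, rfl⟩)).symm
  have htop := piRadical_eq_top_of_le_center (hsep.subgroup C) hCπ' hCcenter
  intro c hc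
  exact map_subtype_piRadical_le C ⟨⟨c, hc⟩, htop ▸ mem_top _, rfl⟩

end HallHigman

section AbelianHall

variable {G : Type*} [Group G] {π : Set ℕ}

def IsAbelianHallSubgroup (π : Set ℕ) (H : Subgroup G) : Prop :=
  IsPiNumber π (Nat.card H) ∧ IsPiNumber πᶜ H.index ∧
    ∀ a b : G, a ∈ H → b ∈ H → a * b = b * a

variable [Finite G]

theorem isPiNumber_compl_index_of_forall_mem {N : Subgroup G} [N.Normal]
    (h : ∀ x : G, IsPiNumber π (orderOf x) → x ∈ N) : IsPiNumber πᶜ N.index := by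
  intro ℓ hℓ hdvd hℓπ
  have : Fact ℓ.Prime := ⟨hℓ⟩
  obtain ⟨q, hq⟩ := exists_prime_orderOf_dvd_card' (G := G ⧸ N) ℓ hdvd
  obtain ⟨x, hx, rfl⟩ := exists_isPiNumber_orderOf_map_eq_of_surjective
    (QuotientGroup.mk'_surjective N) (hq ▸ IsPiNumber.of_prime hℓ hℓπ)
  rw [QuotientGroup.mk'_apply, (QuotientGroup.eq_one_iff x).mpr (h x hx), orderOf_one] at hq
  exact hℓ.ne_one hq.symm

theorem exists_isAbelianHallSubgroup_of_quotient {N : Subgroup G} [N.Normal]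
    (hN : IsPiNumber πᶜ (Nat.card N)) {Q : Subgroup (G ⧸ N)} (hQ : IsAbelianHallSubgroup π Q) :
    ∃ H : Subgroup G, IsAbelianHallSubgroup π H := by
  set P := Q.comap (QuotientGroup.mk' N)
  have hcardN : Nat.card (N.subgroupOf P) = Nat.card N :=
    Nat.card_congr (subgroupOfEquivOfLe (le_comap_mk' N Q)).toEquiv
  have hcop : (Nat.card (N.subgroupOf P)).Coprime (N.subgroupOf P).index := by
    rw [hcardN, ← relIndex, relIndex_comap_mk']
    exact (hQ.1.coprime hN).symm
  obtain ⟨K, hK⟩ := exists_right_complement'_of_coprime hcop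
  set H := K.map P.subtype
  have hHcard : Nat.card H = Nat.card Q := by
    rw [card_map_of_injective P.subtype_injective, ← hK.symm.index_eq_card, ← relIndex,
      relIndex_comap_mk']
  have hHindex : H.index = Nat.card N * Q.index := by
    refine Nat.eq_of_mul_eq_mul_left (Nat.card_pos (α := H)) ?_
    rw [card_mul_index, hHcard, card_eq_card_quotient_mul_card_subgroup N, ← card_mul_index Q]
    ring
  have hNH : Disjoint N H := disjoint_of_coprime_natCard (hHcard ▸ (hQ.1.coprime hN).symm)
  refine ⟨H, hHcard ▸ hQ.1, hHindex ▸ hN.mul hQ.2.1, fun a b ha hb => ?_⟩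
  have hab : (a : G ⧸ N) * b = b * a := hQ.2.2 _ _ (map_subtype_le K ha) (map_subtype_le K hb)
  have hcommN : a * b * (b * a)⁻¹ ∈ N := by
    rw [← QuotientGroup.eq_one_iff, QuotientGroup.mk_mul, QuotientGroup.mk_inv,
      QuotientGroup.mk_mul, QuotientGroup.mk_mul, hab, mul_inv_cancel]
  exact mul_inv_eq_one.mp (disjoint_def.mp hNH hcommN
    (mul_mem (mul_mem ha hb) (inv_mem (mul_mem hb ha))))

theorem isAbelianHallSubgroup_piRadical (hsep : IsPiSeparable G π) (h : piRadical πᶜ G = ⊥)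
    (hcl : ∀ x : G, IsPiNumber π (orderOf x) → IsPiNumber πᶜ (Nat.card {z : G | IsConj x z})) :
    IsAbelianHallSubgroup π (piRadical π G) := by
  have hcent : ∀ x : G, IsPiNumber π (orderOf x) → piRadical π G ≤ centralizer {x} :=
    fun x hx => le_centralizer_of_isPiNumber isPiNumber_card_piRadical (hcl x hx)
  have hmem : ∀ x : G, IsPiNumber π (orderOf x) → x ∈ piRadical π G := fun x hx =>
    centralizer_piRadical_le hsep h fun k hk => (mem_centralizer_singleton_iff.mp (hcent x hx hk))
  refine ⟨isPiNumber_card_piRadical, isPiNumber_compl_index_of_forall_mem hmem,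
    fun a b ha hb => ?_⟩
  have ha' : IsPiNumber π (orderOf a) :=
    isPiNumber_card_piRadical.of_dvd (Subgroup.orderOf_dvd_natCard _ ha)
  exact (mem_centralizer_singleton_iff.mp (hcent a ha' hb)).symm

theorem exists_isAbelianHallSubgroup (G : Type u) [Group G] [Finite G]
    (hsep : IsPiSeparable G π)
    (hcl : ∀ x : G, IsPiNumber π (orderOf x) → IsPiNumber πᶜ (Nat.card {z : G | IsConj x z})) :
    ∃ H : Subgroup G, IsAbelianHallSubgroup π H := by
  induction hG : Nat.card G using Nat.strong_induction_on generalizing G with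
  | _ n ih =>
  by_cases hN : piRadical πᶜ G = ⊥
  · exact ⟨_, isAbelianHallSubgroup_piRadical hsep hN hcl⟩
  set N := piRadical πᶜ G
  have hφ := QuotientGroup.mk'_surjective N
  have hlt : Nat.card (G ⧸ N) < n := by
    rw [← hG, card_eq_card_quotient_mul_card_subgroup N]
    exact lt_mul_of_one_lt_right Nat.card_pos ((one_lt_card_iff_ne_bot N).mpr hN)
  obtain ⟨Q, hQ⟩ := ih _ hlt (G ⧸ N) (hsep.of_surjective hφ) (fun y hy => by
    obtain ⟨x, hx, rfl⟩ := exists_isPiNumber_orderOf_map_eq_of_surjective hφ hy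
    exact (hcl x hx).of_dvd (card_isConj_map_dvd hφ x)) rfl
  exact exists_isAbelianHallSubgroup_of_quotient isPiNumber_card_piRadical hQ

end AbelianHall

theorem abelian_hall_of_pi_class_sizes (G : Type*) [Group G] [Finite G] (π : Set ℕ)
    (hsep : IsPiSeparable G π)
    (hcl : ∀ x : G, (∀ ℓ : ℕ, ℓ.Prime → ℓ ∣ orderOf x → ℓ ∈ π) →
      ∀ ℓ ∈ π, ℓ.Prime → ¬ ℓ ∣ Nat.card {z : G | IsConj x z}) :
    ∃ H : Subgroup G,
      (∀ ℓ : ℕ, ℓ.Prime → ℓ ∣ Nat.card H → ℓ ∈ π) ∧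
      (∀ ℓ : ℕ, ℓ.Prime → ℓ ∣ H.index → ℓ ∉ π) ∧
      (∀ a b : G, a ∈ H → b ∈ H → a * b = b * a) := by
  exact exists_isAbelianHallSubgroup G hsep fun x hx ℓ hℓ hdvd hℓπ => hcl x hx ℓ hℓπ hℓ hdvd
end

section
/- Let G be a finite soluble group in which every element has prime power order. Then the order of G is divisible by at most two primes. -/
/-!
Induct on `|G|`. The last nontrivial term `N` of the derived series is abelian, and commuting
elements of coprime orders multiply to an element whose order is not a prime power, so `N` is a
`p`-group. If `|G|` had three prime divisors, `|G/N|` would have exactly two, `q` and `r`, both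
different from `p`; a Schur–Zassenhaus complement `H` of `N` then acts on `N` by conjugation
without nontrivial fixed points. A nontrivial abelian normal subgroup of `H` is, say, an
`r`-group, and it contains either `C_r × C_r` or a cyclic `⟨u⟩` normalised but not centralised
by an element of order `q`. Either way `H` contains a group `⟨a⟩ ⋊ ⟨b⟩` all of whose cyclic
subgroups have trivial norm on `N`, and counting these norms forces `v ^ r = 1` on `N`, which
is absurd for a nontrivial `p`-group.
-/

open Finset MonoidHom

/-- Groups whose Elements all have Prime Power Order. -/
def IsEPPO (G : Type*) [Monoid G] : Prop :=
  ∀ g : G, ∃ ℓ n : ℕ, ℓ.Prime ∧ orderOf g = ℓ ^ n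

namespace IsEPPO

variable {G : Type*} [Group G]

theorem of_surjective {H : Type*} [Group H] (hG : IsEPPO G) (f : G →* H)
    (hf : Function.Surjective f) : IsEPPO H := by
  intro h
  obtain ⟨g, rfl⟩ := hf h
  obtain ⟨ℓ, n, hℓ, hg⟩ := hG g
  obtain ⟨m, -, hm⟩ := (Nat.dvd_prime_pow hℓ).mp (hg ▸ orderOf_map_dvd f g)
  exact ⟨ℓ, m, hℓ, hm⟩

theorem quotient (hG : IsEPPO G) (N : Subgroup G) [N.Normal] : IsEPPO (G ⧸ N) :=
  hG.of_surjective (QuotientGroup.mk' N) (QuotientGroup.mk'_surjective N)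

theorem subgroup (hG : IsEPPO G) (K : Subgroup G) : IsEPPO K := fun g ↦ by
  simpa only [Subgroup.orderOf_coe] using hG g

/-- `x * y` has order `orderOf x * orderOf y`, a prime power only if one factor is `1`. -/
theorem eq_one_or_eq_one_of_commute (hG : IsEPPO G) {x y : G} (hxy : Commute x y)
    (hco : (orderOf x).Coprime (orderOf y)) : x = 1 ∨ y = 1 := by
  by_contra! ⟨hx, hy⟩
  obtain ⟨ℓ, n, hℓ, hn⟩ := hG (x * y)
  have hdvd : ∀ z : G, z ≠ 1 → orderOf z ∣ orderOf (x * y) → ℓ ∣ orderOf z := by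
    intro z hz hd
    obtain ⟨_ | m, -, hm⟩ := (Nat.dvd_prime_pow hℓ).mp (hn ▸ hd)
    · exact absurd (orderOf_eq_one_iff.mp hm) hz
    · exact hm ▸ dvd_pow_self ℓ m.succ_ne_zero
  rw [hxy.orderOf_mul_eq_mul_orderOf_of_coprime hco] at hdvd
  exact hℓ.not_dvd_one (hco ▸ Nat.dvd_gcd (hdvd x hx (dvd_mul_right _ _))
    (hdvd y hy (dvd_mul_left _ _)))

theorem exists_isPGroup [IsMulCommutative G] (hG : IsEPPO G) : ∃ p, p.Prime ∧ IsPGroup p G := by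
  rcases subsingleton_or_nontrivial G with _ | _
  · exact ⟨2, Nat.prime_two, IsPGroup.of_card (n := 0) (by simp [Nat.card_unique])⟩
  obtain ⟨x, hx⟩ := exists_ne (1 : G)
  obtain ⟨p, n, hp, hxn⟩ := hG x
  refine ⟨p, hp, fun g ↦ ?_⟩
  obtain ⟨ℓ, m, hℓ, hgm⟩ := hG g
  by_cases hℓp : ℓ = p
  · exact ⟨m, hℓp ▸ hgm ▸ pow_orderOf_eq_one g⟩
  have hco : (orderOf g).Coprime (orderOf x) :=
    hgm ▸ hxn ▸ Nat.Coprime.pow m n ((Nat.coprime_primes hℓ hp).mpr hℓp)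
  obtain rfl :=
    (hG.eq_one_or_eq_one_of_commute (isMulCommutative_iff.mp ‹_› g x) hco).resolve_right hx
  exact ⟨0, one_pow _⟩

theorem fixedPointFree_conjNormal (hG : IsEPPO G) {N : Subgroup G} [N.Normal] {p : ℕ}
    [Fact p.Prime] (hN : IsPGroup p N) {g : G} (hg : g ≠ 1) (hgp : ¬ p ∣ orderOf g) :
    FixedPointFree (MulAut.conjNormal g : MulAut N) := by
  intro m hm
  obtain ⟨k, hk⟩ := (IsPGroup.iff_orderOf.mp hN) m
  have hco : (orderOf g).Coprime (orderOf (m : G)) := by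
    rw [Subgroup.orderOf_coe, hk]
    exact Nat.Coprime.pow_right k ((Nat.Prime.coprime_iff_not_dvd Fact.out).mpr hgp).symm
  have hgm : g * m * g⁻¹ = m := by rw [← MulAut.conjNormal_apply, hm]
  have hcomm : Commute g m := mul_inv_eq_iff_eq_mul.mp hgm
  exact Subtype.ext ((hG.eq_one_or_eq_one_of_commute hcomm hco).resolve_left hg)

end IsEPPO

theorem IsPGroup.primeFactors_card_subset_insert {G : Type*} [Group G] [Finite G] {p : ℕ}
    [Fact p.Prime] {N : Subgroup G} (hN : IsPGroup p N) :
    (Nat.card G).primeFactors ⊆ insert p N.index.primeFactors := by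
  intro ℓ hℓ
  obtain ⟨hℓp, hℓG, -⟩ := Nat.mem_primeFactors.mp hℓ
  rw [← N.card_mul_index] at hℓG
  rcases hℓp.dvd_mul.mp hℓG with hℓN | hℓN
  · obtain ⟨k, hk⟩ := IsPGroup.iff_card.mp hN
    rw [(Nat.prime_dvd_prime_iff_eq hℓp Fact.out).mp (hℓp.dvd_of_dvd_pow (hk ▸ hℓN))]
    exact mem_insert_self p _
  · exact mem_insert_of_mem (Nat.mem_primeFactors.mpr ⟨hℓp, hℓN, N.index_ne_zero_of_finite⟩)

open scoped commutatorElement in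
theorem Group.IsSolvable.exists_ne_bot_normal_isMulCommutative (G : Type*) [Group G]
    [Group.IsSolvable G] [Nontrivial G] :
    ∃ A : Subgroup G, A ≠ ⊥ ∧ A.Normal ∧ IsMulCommutative A := by
  classical
  have hsol := (isSolvable_def G).mp inferInstance
  obtain ⟨n, hn⟩ : ∃ n, Nat.find hsol = n + 1 := Nat.exists_eq_add_one.mpr
    (Nat.pos_of_ne_zero fun h0 ↦ by simpa [h0] using Nat.find_spec hsol)
  refine ⟨derivedSeries G n, Nat.find_min hsol (by omega), derivedSeries_normal G n,
    ⟨⟨fun x y ↦ Subtype.ext ?_⟩⟩⟩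
  have hbot : derivedSeries G (n + 1) = ⊥ := hn ▸ Nat.find_spec hsol
  rw [derivedSeries_succ] at hbot
  have hxy : ⁅(x : G), (y : G)⁆ ∈ (⊥ : Subgroup G) :=
    hbot ▸ Subgroup.commutator_mem_commutator x.2 y.2
  exact commutatorElement_eq_one_iff_commute.mp (Subgroup.mem_bot.mp hxy)

theorem geom_sum_eq_zero_iff_orderOf_dvd {K : Type*} [DivisionRing K] {x : K} (hx : x ≠ 1)
    (n : ℕ) : ∑ i ∈ range n, x ^ i = 0 ↔ orderOf x ∣ n := by
  rw [geom_sum_eq hx, div_eq_zero_iff, sub_eq_zero, sub_eq_zero, or_iff_left hx,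
    orderOf_dvd_iff_pow_eq_one]

section FixedPointFreeAction

variable {G : Type*} [Group G]

theorem pow_eq_pow_iff_natCast_eq {x : G} {n a b : ℕ} (hx : orderOf x = n) :
    x ^ a = x ^ b ↔ (a : ZMod n) = b := by
  rw [pow_eq_pow_iff_modEq, ZMod.natCast_eq_natCast_iff, hx]

theorem pow_eq_pow_of_natCast_eq {x : G} {n a b : ℕ} (hx : x ^ n = 1)
    (hab : (a : ZMod n) = b) : x ^ a = x ^ b :=
  pow_eq_pow_iff_modEq.mpr
    (((ZMod.natCast_eq_natCast_iff _ _ _).mp hab).of_dvd (orderOf_dvd_of_pow_eq_one hx))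

theorem pow_mul_conj_eq_of_conj_eq_pow {a b : G} {s : ℕ} (hab : b * a * b⁻¹ = a ^ s) (i : ℕ) :
    b ^ i * a * (b ^ i)⁻¹ = a ^ s ^ i := by
  induction i with
  | zero => simp
  | succ i ih =>
    calc b ^ (i + 1) * a * (b ^ (i + 1))⁻¹ = b * (b ^ i * a * (b ^ i)⁻¹) * b⁻¹ := by group
      _ = (b * a * b⁻¹) ^ s ^ i := by rw [ih, conj_pow]
      _ = a ^ s ^ (i + 1) := by rw [hab, ← pow_mul, ← pow_succ']

theorem pow_mul_pow_eq_of_conj_eq_pow {a b : G} {s : ℕ} (hab : b * a * b⁻¹ = a ^ s) (k i : ℕ) :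
    (a ^ k * b) ^ i = a ^ (k * ∑ t ∈ range i, s ^ t) * b ^ i := by
  induction i with
  | zero => simp
  | succ i ih =>
    calc (a ^ k * b) ^ (i + 1)
        = a ^ (k * ∑ t ∈ range i, s ^ t) * (b ^ i * a * (b ^ i)⁻¹) ^ k * b ^ (i + 1) := by
          rw [pow_succ, ih, conj_pow]; group
      _ = a ^ (k * ∑ t ∈ range (i + 1), s ^ t) * b ^ (i + 1) := by
          rw [pow_mul_conj_eq_of_conj_eq_pow hab, ← pow_mul, ← pow_add, sum_range_succ,
            mul_add, mul_comm (s ^ i)]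

variable {V : Type*} [CommGroup V] (φ : G →* MulAut V)

theorem prod_zmod_pow_eq_one_of_fixedPointFree {e : ℕ} [NeZero e] {w : G} (hw : w ^ e = 1)
    (hφw : FixedPointFree (φ w)) (v : V) : ∏ k : ZMod e, φ (w ^ k.val) v = 1 := by
  apply hφw
  calc φ w (∏ k : ZMod e, φ (w ^ k.val) v) = ∏ k : ZMod e, φ (w ^ (k + 1).val) v := by
        simp only [map_prod, ← MulAut.mul_apply, ← map_mul, ← pow_succ']
        refine prod_congr rfl fun k _ ↦ ?_
        rw [pow_eq_pow_of_natCast_eq hw (b := (k + 1).val) (by simp)]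
    _ = ∏ k : ZMod e, φ (w ^ k.val) v :=
        Equiv.prod_comp (Equiv.addRight (1 : ZMod e)) (fun k ↦ φ (w ^ k.val) v)

/-- The norms of `v` over `⟨a⟩` and over each `⟨a ^ k * b⟩` are trivial. Since
`(a ^ k * b) ^ i = a ^ (k * σᵢ) * b ^ i` with `σᵢ = ∑ t < i, s ^ t` a unit mod `r` for `e ∤ i`,
multiplying `φ ((a ^ k * b) ^ i) v` over all `k` and `i` in both orders leaves only the terms with
`i = 0`, whose product is `v ^ r`. -/
theorem pow_eq_one_of_fixedPointFree_of_conj_eq_pow (hφ : ∀ g, g ≠ 1 → FixedPointFree (φ g))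
    {r e s : ℕ} [Fact r.Prime] [NeZero e] {a b : G} (ha : orderOf a = r) (hb : b ^ e = 1)
    (hab : b * a * b⁻¹ = a ^ s) (hba : b ∉ Subgroup.zpowers a)
    (hσ : ∀ i, ∑ t ∈ range i, (s : ZMod r) ^ t = 0 ↔ e ∣ i) (v : V) : v ^ r = 1 := by
  have hform : ∀ (k : ZMod r) (i : ℕ),
      (a ^ k.val * b) ^ i = a ^ (k * ∑ t ∈ range i, (s : ZMod r) ^ t).val * b ^ i := by
    intro k i
    rw [pow_mul_pow_eq_of_conj_eq_pow hab, (pow_eq_pow_iff_natCast_eq ha).mpr]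
    simp
  have hnorm_k : ∀ k : ZMod r, ∏ i : ZMod e, φ ((a ^ k.val * b) ^ i.val) v = 1 := by
    intro k
    refine prod_zmod_pow_eq_one_of_fixedPointFree φ ?_ (hφ _ fun h ↦ hba ?_) v
    · rw [hform, (hσ e).mpr dvd_rfl, mul_zero, ZMod.val_zero, pow_zero, one_mul, hb]
    · rw [eq_inv_of_mul_eq_one_right h]
      exact Subgroup.inv_mem _ (Subgroup.npow_mem_zpowers a _)
  have hnorm_i : ∀ i : ZMod e, i ≠ 0 → ∏ k : ZMod r, φ ((a ^ k.val * b) ^ i.val) v = 1 := by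
    intro i hi
    have hσi : ∑ t ∈ range i.val, (s : ZMod r) ^ t ≠ 0 := fun h ↦
      hi ((ZMod.val_eq_zero i).mp (Nat.eq_zero_of_dvd_of_lt ((hσ _).mp h) (ZMod.val_lt i)))
    have ha1 : a ≠ 1 := fun h ↦ (Fact.out : r.Prime).ne_one (by rw [← ha, h, orderOf_one])
    simp only [hform, map_mul, MulAut.mul_apply]
    exact (Equiv.prod_comp (Equiv.mulRight₀ _ hσi)
      (fun k ↦ φ (a ^ k.val) (φ (b ^ i.val) v))).trans
      (prod_zmod_pow_eq_one_of_fixedPointFree φ (ha ▸ pow_orderOf_eq_one a) (hφ a ha1) _)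
  calc v ^ r = ∏ i : ZMod e, ∏ k : ZMod r, φ ((a ^ k.val * b) ^ i.val) v := by
        rw [Fintype.prod_eq_single 0 hnorm_i]
        simp
    _ = 1 := by
        rw [prod_comm]
        exact prod_eq_one fun k _ ↦ hnorm_k k

theorem pow_eq_one_of_fixedPointFree_of_commute (hφ : ∀ g, g ≠ 1 → FixedPointFree (φ g))
    {r : ℕ} [Fact r.Prime] {a b : G} (ha : orderOf a = r) (hb : b ^ r = 1) (hab : Commute a b)
    (hba : b ∉ Subgroup.zpowers a) (v : V) : v ^ r = 1 :=
  pow_eq_one_of_fixedPointFree_of_conj_eq_pow φ hφ (s := 1) ha hb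
    (by rw [hab.symm.eq, mul_inv_cancel_right, pow_one]) hba
    (fun i ↦ by simp [ZMod.natCast_eq_zero_iff]) v

theorem pow_eq_one_of_fixedPointFree_of_not_commute (hφ : ∀ g, g ≠ 1 → FixedPointFree (φ g))
    {r q : ℕ} [Fact r.Prime] [Fact q.Prime] {a b : G} (ha : orderOf a = r) (hb : orderOf b = q)
    (hab : ¬ Commute a b) (hba : b * a * b⁻¹ ∈ Subgroup.zpowers a) (v : V) : v ^ r = 1 := by
  have hfin : IsOfFinOrder a := orderOf_pos_iff.mp (ha ▸ (Fact.out : r.Prime).pos)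
  obtain ⟨s, hs : a ^ s = b * a * b⁻¹⟩ := hfin.mem_powers_iff_mem_zpowers.mpr hba
  have hs1 : (s : ZMod r) ≠ 1 := fun h ↦ hab (mul_inv_eq_iff_eq_mul.mp (by
    rw [← hs, (pow_eq_pow_iff_natCast_eq ha (b := 1)).mpr (by rw [h, Nat.cast_one]),
      pow_one])).symm
  have hsq : (s : ZMod r) ^ q = 1 := by
    have h := pow_mul_conj_eq_of_conj_eq_pow hs.symm q
    rw [← hb, pow_orderOf_eq_one, one_mul, inv_one, mul_one, hb] at h
    exact_mod_cast (pow_eq_pow_iff_natCast_eq ha (a := s ^ q) (b := 1)).mp (by rw [pow_one, ← h])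
  have hbq : b ∉ Subgroup.zpowers a := fun hb' ↦ by
    obtain ⟨k, rfl⟩ := Subgroup.mem_zpowers_iff.mp hb'
    exact hab ((Commute.refl a).zpow_right k)
  exact pow_eq_one_of_fixedPointFree_of_conj_eq_pow φ hφ ha (hb ▸ pow_orderOf_eq_one b)
    hs.symm hbq (fun i ↦ orderOf_eq_prime hsq hs1 ▸ geom_sum_eq_zero_iff_orderOf_dvd hs1 i) v

end FixedPointFreeAction

theorem exists_prime_dvd_card_forall_pow_eq_one {H V : Type*} [Group H] [Finite H]
    [Group.IsSolvable H] [CommGroup V] (hH : IsEPPO H) (φ : H →* MulAut V)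
    (hφ : ∀ g, g ≠ 1 → FixedPointFree (φ g)) (hcard : 1 < (Nat.card H).primeFactors.card) :
    ∃ r, r.Prime ∧ r ∣ Nat.card H ∧ ∀ v : V, v ^ r = 1 := by
  rcases subsingleton_or_nontrivial H with _ | _
  · simp [Nat.card_unique] at hcard
  obtain ⟨A, hA, hAn, hAc⟩ := Group.IsSolvable.exists_ne_bot_normal_isMulCommutative H
  obtain ⟨r, hr, hAr⟩ := (hH.subgroup A).exists_isPGroup
  have := Fact.mk hr
  have hrA : r ∣ Nat.card A := hAr.card_eq_or_dvd.resolve_left (mt Subgroup.card_eq_one.mp hA)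
  obtain ⟨u, hu⟩ := exists_prime_orderOf_dvd_card' r hrA
  rw [← Subgroup.orderOf_coe] at hu
  refine ⟨r, hr, hrA.trans (Subgroup.card_subgroup_dvd_card A), ?_⟩
  by_cases hnoncyclic : ∃ v ∈ A, v ^ r = 1 ∧ v ∉ Subgroup.zpowers (u : H)
  · obtain ⟨v, hvA, hvr, hvu⟩ := hnoncyclic
    have huv : Commute (u : H) v :=
      congrArg Subtype.val (isMulCommutative_iff.mp hAc u ⟨v, hvA⟩)
    exact pow_eq_one_of_fixedPointFree_of_commute φ hφ hu hvr huv hvu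
  push Not at hnoncyclic
  obtain ⟨q, hq, hqr⟩ := (one_lt_card_iff_nontrivial.mp hcard).exists_ne r
  have := Fact.mk (Nat.prime_of_mem_primeFactors hq)
  obtain ⟨y, hy⟩ := exists_prime_orderOf_dvd_card' q (Nat.dvd_of_mem_primeFactors hq)
  have huy : ¬ Commute (u : H) y := fun h ↦ by
    have hco : (orderOf (u : H)).Coprime (orderOf y) := by
      rw [hu, hy]
      exact (Nat.coprime_primes hr Fact.out).mpr hqr.symm
    rcases hH.eq_one_or_eq_one_of_commute h hco with h1 | h1
    · exact hr.ne_one (by rw [← hu, h1, orderOf_one])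
    · exact (Fact.out : q.Prime).ne_one (by rw [← hy, h1, orderOf_one])
  refine pow_eq_one_of_fixedPointFree_of_not_commute φ hφ hu hy huy
    (hnoncyclic _ (hAn.conj_mem _ u.2 y) ?_)
  rw [conj_pow, ← hu, pow_orderOf_eq_one, mul_one, mul_inv_cancel]

open scoped IsMulCommutative in
theorem IsEPPO.primeFactors_card_le_two_of_quotient {G : Type*} [Group G] [Finite G]
    [Group.IsSolvable G] (hG : IsEPPO G) {N : Subgroup G} [N.Normal] [IsMulCommutative N]
    {p : ℕ} [Fact p.Prime] (hN : IsPGroup p N) (hN1 : N ≠ ⊥)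
    (hQ : (Nat.card (G ⧸ N)).primeFactors.card ≤ 2) :
    (Nat.card G).primeFactors.card ≤ 2 := by
  by_contra! h3
  rw [← Subgroup.index_eq_card] at hQ
  have hsub := hN.primeFactors_card_subset_insert
  have hpN : p ∉ N.index.primeFactors := fun hp ↦ by
    have := card_le_card (insert_eq_of_mem hp ▸ hsub)
    omega
  have h2 : 1 < N.index.primeFactors.card := by
    have := card_le_card hsub
    rw [card_insert_of_notMem hpN] at this
    omega
  have hpN' : ¬ p ∣ N.index := fun h ↦
    hpN (Nat.mem_primeFactors.mpr ⟨Fact.out, h, N.index_ne_zero_of_finite⟩)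
  obtain ⟨k, hk⟩ := IsPGroup.iff_card.mp hN
  obtain ⟨H, hH⟩ := Subgroup.exists_right_complement'_of_coprime (N := N)
    (hk ▸ Nat.Coprime.pow_left k ((Nat.Prime.coprime_iff_not_dvd Fact.out).mpr hpN'))
  have hHN : Nat.card H = N.index := hH.symm.index_eq_card.symm
  have hφ : ∀ g : H, g ≠ 1 → FixedPointFree (MulAut.conjNormal.comp H.subtype g) :=
    fun g hg ↦ hG.fixedPointFree_conjNormal hN (by simpa using hg) fun h ↦
      hpN' (hHN ▸ h.trans (Subgroup.orderOf_coe g ▸ orderOf_dvd_natCard g))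
  obtain ⟨r, hr, hrH, hrN⟩ :=
    exists_prime_dvd_card_forall_pow_eq_one (hG.subgroup H) _ hφ (hHN ▸ h2)
  have := Fact.mk hr
  have hNr : IsPGroup r N := fun v ↦ ⟨1, by rw [pow_one, hrN]⟩
  have hrp : p ≠ r := fun h ↦ hpN' (h ▸ hHN ▸ hrH)
  exact hN1 (Subgroup.card_eq_one.mp
    ((Nat.coprime_self _).mp (IsPGroup.coprime_card_of_ne p r hrp N N hN hNr)))

theorem primeFactors_card_le_two_of_solvable_prime_power_orders
    (G : Type*) [Group G] [Finite G] [Group.IsSolvable G]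
    (h : ∀ g : G, ∃ (ℓ : ℕ) (n : ℕ), ℓ.Prime ∧ orderOf g = ℓ ^ n) :
    (Nat.card G).primeFactors.card ≤ 2 := by
  induction hc : Nat.card G using Nat.strong_induction_on generalizing G with
  | _ n ih =>
  subst hc
  rcases subsingleton_or_nontrivial G with _ | _
  · simp [Nat.card_unique]
  obtain ⟨N, hN, _, _⟩ := Group.IsSolvable.exists_ne_bot_normal_isMulCommutative G
  obtain ⟨p, hp, hNp⟩ := (IsEPPO.subgroup h N).exists_isPGroup
  have := Fact.mk hp
  have hQ : Nat.card (G ⧸ N) < Nat.card G := by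
    rw [← Subgroup.index_eq_card, ← N.card_mul_index]
    exact lt_mul_left (Nat.pos_of_ne_zero N.index_ne_zero_of_finite)
      ((Subgroup.one_lt_card_iff_ne_bot N).mpr hN)
  exact IsEPPO.primeFactors_card_le_two_of_quotient h hNp hN
    (ih _ hQ _ (IsEPPO.quotient h N) rfl)
end

section
/- Let G be a finite group, p a prime, and suppose G has exactly one noncentral conjugacy class a^G of p-regular elements, where a may be assumed to be an r-element for some prime r ≠ p. If w ∈ Z(G) is a nontrivial p'-element, then w is an r-element. -/
theorem central_p_regular_is_r_element_of_unique_class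
    (G : Type*) [Group G] [Finite G] (p r : ℕ) (hp : p.Prime) (hr : r.Prime) (hpr : r ≠ p)
    (a : G) (ha₁ : ¬ p ∣ orderOf a) (ha₂ : a ∉ Subgroup.center G)
    (har : ∃ n : ℕ, orderOf a = r ^ n)
    (huniq : ∀ b : G, ¬ p ∣ orderOf b → b ∉ Subgroup.center G → IsConj a b)
    (w : G) (hw : w ∈ Subgroup.center G) (hw1 : w ≠ 1) (hwp : ¬ p ∣ orderOf w) :
    ∃ m : ℕ, orderOf w = r ^ m := by
  obtain ⟨n, han⟩ := har
  have hw0 : orderOf w ≠ 0 := (orderOf_pos w).ne'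
  refine ⟨(orderOf w).primeFactorsList.length,
    Nat.eq_prime_pow_of_unique_prime_dvd hw0 ?_⟩
  intro q hq hqd
  by_contra hqr
  -- q ≠ p
  have hqp : q ≠ p := fun h => hwp (h ▸ hqd)
  set u := w ^ (orderOf w / q) with hu
  have hou : orderOf u = q := orderOf_pow_orderOf_div hw0 hqd
  have huc : u ∈ Subgroup.center G := Subgroup.pow_mem _ hw _
  have hcomm : Commute a u := Subgroup.mem_center_iff.mp huc a
  have hcop : Nat.Coprime (orderOf a) (orderOf u) := by
    rw [han, hou]
    exact Nat.Coprime.pow_left _ ((Nat.coprime_primes hr hq).mpr fun h => hqr h.symm)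
  have hob : orderOf (a * u) = orderOf a * orderOf u :=
    hcomm.orderOf_mul_eq_mul_orderOf_of_coprime hcop
  have hbp : ¬ p ∣ orderOf (a * u) := by
    rw [hob]
    rintro h
    rcases (Nat.Prime.dvd_mul hp).mp h with h | h
    · exact ha₁ h
    · rw [hou] at h
      exact hqp ((Nat.prime_dvd_prime_iff_eq hp hq).mp h).symm
  have hbz : a * u ∉ Subgroup.center G := fun h => ha₂ (by
    have : a = (a * u) * u⁻¹ := by group
    rw [this]
    exact Subgroup.mul_mem _ h (Subgroup.inv_mem _ huc))
  obtain ⟨c, hc⟩ := huniq (a * u) hbp hbz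
  have := SemiconjBy.orderOf_eq _ hc
  rw [hob, hou] at this
  have hq1 : 1 < q := hq.one_lt
  nlinarith [orderOf_pos a, this]
end
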